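/- Let a, b ≥ 2 be coprime integers, p a prime not dividing b, write a = p^u·a' with p ∤ a', and let r ≥ 0. For each positive integer m' not divisible by p, let s(m') be the unique integer with ℓ(a,b,p^{s−1}m') ≤ r < ℓ(a,b,p^s m') if it exists and 0 otherwise, and define h(m') = s(m') if neither a' nor b divides m', h(m') = min{s(m'), u} if a' but not b divides m', and h(m') = 0 if b divides m'. Then the sum of h(m') over all positive integers m' not divisible by p equals (2r+1)(a−1)(b−1)/2. -/

import Mathlib

open Set

/-- ℓ(a,b,m): the number of pairs (i,j) of positive integers with a·i + b·j = m. -/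
noncomputable def lcount (a b m : ℕ) : ℕ :=
  {q : ℕ × ℕ | 0 < q.1 ∧ 0 < q.2 ∧ a * q.1 + b * q.2 = m}.ncard

open Classical in
/-- s(a,b,r,p,m'): the unique integer s ≥ 1 with ℓ(a,b,p^{s-1}m') ≤ r < ℓ(a,b,p^s m'),
if it exists, and 0 otherwise. -/
noncomputable def sfun (a b r p m' : ℕ) : ℕ :=
  if H : ∃ s : ℕ, 1 ≤ s ∧ lcount a b (p ^ (s - 1) * m') ≤ r ∧ r < lcount a b (p ^ s * m')
  then H.choose else 0

open Classical in
/-- h(a,b,r,p,m') as in the p-typical decomposition, where a = p^u·a'. -/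
noncomputable def hfun (a b r p u a' m' : ℕ) : ℕ :=
  if b ∣ m' then 0
  else if a' ∣ m' then min (sfun a b r p m') u
  else sfun a b r p m'

lemma lset_finite (a b m : ℕ) (ha : 0 < a) (hb : 0 < b) :
    {q : ℕ × ℕ | 0 < q.1 ∧ 0 < q.2 ∧ a * q.1 + b * q.2 = m}.Finite := by
  apply Set.Finite.subset (Set.finite_Icc (1,1) (m,m))
  rintro ⟨i,j⟩ ⟨hi,hj,he⟩
  dsimp only at hi hj he
  constructor
  · exact ⟨hi, hj⟩
  · constructor
    · calc i ≤ a * i := Nat.le_mul_of_pos_left i ha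
        _ ≤ m := by omega
    · calc j ≤ b * j := Nat.le_mul_of_pos_left j hb
        _ ≤ m := by omega

lemma lcount_eq_card (a b m : ℕ) (ha : 0 < a) (hb : 0 < b) :
    lcount a b m = (lset_finite a b m ha hb).toFinset.card :=
  Set.ncard_eq_toFinset_card _ _

lemma lcount_lt_of_ge (a b r m x0 : ℕ) (ha : 0 < a) (hb : 0 < b)
    (hx1 : 1 ≤ x0) (hmod : a * x0 ≡ m [MOD b])
    (hge : a * x0 + r * (a * b) + b ≤ m) : r < lcount a b m := by
  rw [lcount_eq_card a b m ha hb]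
  have hax : a * x0 ≤ m := by omega
  obtain ⟨c, hc⟩ := (Nat.modEq_iff_dvd' hax).mp hmod
  have hcr : r * a + 1 ≤ c := by
    have h1 : b * (r * a + 1) ≤ b * c := by
      calc b * (r*a+1) = r * (a*b) + b := by ring
        _ ≤ m - a * x0 := by omega
        _ = b * c := hc
    exact Nat.le_of_mul_le_mul_left h1 hb
  have key := Finset.card_le_card_of_injOn (fun k => (x0 + b*k, c - a*k))
    (s := Finset.range (r+1)) (t := (lset_finite a b m ha hb).toFinset) ?_ ?_
  · simpa using key
  · intro k hk
    simp only [Finset.mem_coe, Finset.mem_range] at hk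
    have hak : a * k ≤ a * r := Nat.mul_le_mul_left a (by omega)
    have hakc : a * k + 1 ≤ c := by
      have : a * r = r * a := mul_comm a r
      omega
    rw [Finset.mem_coe, Set.Finite.mem_toFinset]
    show 0 < x0 + b*k ∧ 0 < c - a*k ∧ a*(x0 + b*k) + b*(c - a*k) = m
    refine ⟨by positivity, by omega, ?_⟩
    obtain ⟨d, hd⟩ : ∃ d, c = a * k + d := ⟨c - a*k, by omega⟩
    have hsub : c - a * k = d := by omega
    rw [hsub]
    have : a * (x0 + b * k) + b * d = a * x0 + b * c := by rw [hd]; ring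
    omega
  · intro k hk k' hk' hkk
    simp only [Prod.mk.injEq] at hkk
    have : b * k = b * k' := by omega
    exact Nat.eq_of_mul_eq_mul_left hb this

lemma sol_decomp (a b m x0 : ℕ) (hb : 0 < b) (hab : Nat.Coprime a b)
    (hx2 : x0 < b) (hmod : a * x0 ≡ m [MOD b]) {i j : ℕ}
    (he : a * i + b * j = m) : ∃ k, i = b * k + x0 := by
  have h1 : a * i ≡ a * x0 [MOD b] := by
    have h2 : m % b = (a * i) % b := by
      rw [← he]; exact (Nat.add_mul_mod_self_left (a*i) b j)
    exact Nat.ModEq.trans h2.symm hmod.symm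
  have h3 : i ≡ x0 [MOD b] := (Nat.ModEq.cancel_left_of_coprime (Nat.coprime_comm.mp hab) h1)
  have h4 : i % b = x0 := by
    have := h3
    unfold Nat.ModEq at this
    rw [Nat.mod_eq_of_lt hx2] at this
    exact this
  exact ⟨i / b, by have := Nat.div_add_mod i b; omega⟩

lemma lcount_le_of_lt (a b r m x0 : ℕ) (ha : 0 < a) (hb : 0 < b)
    (hab : Nat.Coprime a b) (hx2 : x0 < b) (hmod : a * x0 ≡ m [MOD b])
    (hlt : m < a * x0 + r * (a * b) + b) : lcount a b m ≤ r := by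
  rw [lcount_eq_card a b m ha hb]
  have key := Finset.card_le_card_of_injOn (fun q : ℕ × ℕ => (q.1 - x0)/b)
    (s := (lset_finite a b m ha hb).toFinset) (t := Finset.range r) ?_ ?_
  · simpa using key
  · rintro ⟨i,j⟩ hq
    rw [Finset.mem_coe, Set.Finite.mem_toFinset] at hq
    obtain ⟨hi, hj, he⟩ := hq
    dsimp only at hi hj he ⊢
    obtain ⟨k, hk⟩ := sol_decomp a b m x0 hb hab hx2 hmod he
    have e1 : a * i = a * x0 + (a*b) * k := by rw [hk]; ring
    have e2 : b ≤ b * j := Nat.le_mul_of_pos_right b hj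
    have e3 : r * (a * b) = (a*b) * r := by ring
    have e4 : (a*b) * k < (a*b) * r := by omega
    have e5 : k < r := Nat.lt_of_mul_lt_mul_left e4
    have e6 : (i - x0) / b = k := by
      rw [show i - x0 = b * k by omega]
      exact Nat.mul_div_cancel_left k hb
    rw [Finset.mem_coe, Finset.mem_range, e6]
    exact e5
  · rintro ⟨i,j⟩ hq ⟨i',j'⟩ hq' hf
    simp only [Finset.mem_coe, Set.Finite.mem_toFinset] at hq hq'
    obtain ⟨hi, hj, he⟩ := hq
    obtain ⟨hi', hj', he'⟩ := hq'
    dsimp only at hi hj he hi' hj' he' hf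
    obtain ⟨k, hk⟩ := sol_decomp a b m x0 hb hab hx2 hmod he
    obtain ⟨k', hk'⟩ := sol_decomp a b m x0 hb hab hx2 hmod he'
    have e6 : (i - x0) / b = k := by
      rw [show i - x0 = b * k by omega]; exact Nat.mul_div_cancel_left k hb
    have e6' : (i' - x0) / b = k' := by
      rw [show i' - x0 = b * k' by omega]; exact Nat.mul_div_cancel_left k' hb
    rw [e6, e6'] at hf
    subst hf
    have hii : i = i' := by omega
    subst hii
    have hjj : j = j' := Nat.eq_of_mul_eq_mul_left hb (by omega)
    rw [hjj]

lemma mul_sub_one_add (a b : ℕ) (hb : 1 ≤ b) : a * (b-1) + a = a * b := by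
  obtain ⟨B, rfl⟩ : ∃ B, b = B + 1 := ⟨b-1, by omega⟩
  simp only [Nat.add_sub_cancel]
  ring

lemma exists_x0 (a b m : ℕ) (hb : 2 ≤ b) (hab : Nat.Coprime a b) (hbm : ¬ b ∣ m) :
    ∃ x0, 1 ≤ x0 ∧ x0 < b ∧ a * x0 ≡ m [MOD b] := by
  obtain ⟨y, -, hy⟩ := Nat.exists_mul_mod_eq_one_of_coprime hab (by omega)
  have h1 : a * y ≡ 1 [MOD b] := by
    unfold Nat.ModEq; rw [hy]; symm; apply Nat.mod_eq_of_lt; omega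
  have h2 : a * ((y * m) % b) ≡ m [MOD b] := by
    calc a * ((y * m) % b) ≡ a * (y * m) [MOD b] :=
          Nat.ModEq.mul_left a (Nat.mod_modEq _ b)
      _ = (a * y) * m := by ring
      _ ≡ 1 * m [MOD b] := Nat.ModEq.mul_right m h1
      _ = m := one_mul m
  refine ⟨(y * m) % b, ?_, Nat.mod_lt _ (by omega), h2⟩
  rcases Nat.eq_zero_or_pos ((y * m) % b) with h0 | h
  · exfalso
    rw [h0, Nat.mul_zero] at h2
    exact hbm (Nat.modEq_zero_iff_dvd.mp h2.symm)
  · exact h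

lemma lcount_mono_mul (a b m c : ℕ) (ha : 0 < a) (hb : 0 < b) (hc : 0 < c) :
    lcount a b m ≤ lcount a b (c * m) := by
  rw [lcount_eq_card a b m ha hb, lcount_eq_card a b (c*m) ha hb]
  apply Finset.card_le_card_of_injOn (fun q : ℕ × ℕ => (c * q.1, c * q.2))
  · rintro ⟨i,j⟩ hq
    rw [Finset.mem_coe, Set.Finite.mem_toFinset] at hq ⊢
    obtain ⟨hi,hj,he⟩ := hq
    dsimp only at hi hj he
    refine ⟨by positivity, by positivity, ?_⟩
    show a * (c*i) + b * (c*j) = c * m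
    rw [← he]; ring
  · rintro ⟨i,j⟩ _ ⟨i',j'⟩ _ hf
    simp only [Prod.mk.injEq] at hf
    obtain ⟨h1, h2⟩ := hf
    have e1 := Nat.eq_of_mul_eq_mul_left hc h1
    have e2 := Nat.eq_of_mul_eq_mul_left hc h2
    simp_all

lemma lcount_mono_pow (a b m p s t : ℕ) (ha : 0 < a) (hb : 0 < b) (hp : 0 < p)
    (hst : s ≤ t) : lcount a b (p^s * m) ≤ lcount a b (p^t * m) := by
  have h : p^t * m = p^(t-s) * (p^s * m) := by
    rw [← mul_assoc, ← pow_add]; congr 2; omega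
  rw [h]
  exact lcount_mono_mul a b (p^s*m) (p^(t-s)) ha hb (pow_pos hp _)

lemma lcount_big (a b r m : ℕ) (ha : 2 ≤ a) (hb : 2 ≤ b) (hab : Nat.Coprime a b)
    (hbm : ¬ b ∣ m) (hm : (2*r+1)*(a*b) ≤ m) : r < lcount a b m := by
  obtain ⟨x0, hx1, hx2, hmod⟩ := exists_x0 a b m hb hab hbm
  apply lcount_lt_of_ge a b r m x0 (by omega) (by omega) hx1 hmod
  have hax1 : a * x0 ≤ a * (b-1) := Nat.mul_le_mul_left a (by omega)
  have hax2 : a * (b-1) + a = a * b := mul_sub_one_add a b (by omega)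
  have hab1 : a * b ≤ (2*r+1)*(a*b) := Nat.le_mul_of_pos_left _ (by omega)
  have hax : a * x0 ≤ m := by omega
  obtain ⟨c, hc⟩ := (Nat.modEq_iff_dvd' hax).mp hmod
  have e3 : (2*r+1)*(a*b) = b*(r*a) + (r*(a*b) + a*b) := by ring
  have h1 : b * (r*a) < b * c := by omega
  have h2 : r*a + 1 ≤ c := Nat.lt_of_mul_lt_mul_left h1
  have h3 : b * (r*a+1) ≤ b * c := Nat.mul_le_mul_left b h2
  have h4 : b * (r*a+1) = r*(a*b) + b := by ring
  omega

lemma lcount_le_iff (a b r m x0 : ℕ) (ha : 2 ≤ a) (hb : 2 ≤ b)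
    (hab : Nat.Coprime a b) (hx1 : 1 ≤ x0) (hx2 : x0 < b)
    (hmod : a * x0 ≡ m [MOD b]) :
    lcount a b m ≤ r ↔ m < a * x0 + r * (a * b) + b := by
  constructor
  · intro h
    by_contra hc
    exact absurd h (not_le.mpr (lcount_lt_of_ge a b r m x0 (by omega) (by omega) hx1 hmod (by omega)))
  · exact lcount_le_of_lt a b r m x0 (by omega) (by omega) hab hx2 hmod

lemma arith_xor (P Q R b m : ℕ) (hb : 1 ≤ b)
    (hPQ : P + 1 ≤ Q) (hbR : b ∣ R)
    (hm2 : m < 2*R + Q) (hm1 : 1 ≤ m)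
    (hmR : m ≡ P + R [MOD b]) (hne : m ≠ P + R) :
    (m < P + R + b ↔ ¬ (2*R + Q - m < (Q - P) + R + b)) := by
  constructor
  · intro h1 h2
    apply hne
    rcases le_or_gt m (P + R) with hle | hlt
    · obtain ⟨k, hk⟩ := (Nat.modEq_iff_dvd' hle).mp hmR
      clear hmR hbR hne
      rcases Nat.eq_zero_or_pos k with h0 | hk1
      · subst h0; omega
      · have hbk : b ≤ b * k := Nat.le_mul_of_pos_right b hk1
        omega
    · obtain ⟨k, hk⟩ := (Nat.modEq_iff_dvd' hlt.le).mp hmR.symm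
      clear hmR hbR hne
      rcases Nat.eq_zero_or_pos k with h0 | hk1
      · subst h0; omega
      · have hbk : b ≤ b * k := Nat.le_mul_of_pos_right b hk1
        omega
  · intro h2
    by_contra h1
    clear hmR hbR hne
    push_neg at h1 h2
    omega

lemma lcount_xor (a b r m : ℕ) (ha : 2 ≤ a) (hb : 2 ≤ b) (hab : Nat.Coprime a b)
    (ham : ¬ a ∣ m) (hbm : ¬ b ∣ m) (hm1 : 1 ≤ m) (hm2 : m < (2*r+1)*(a*b)) :
    (lcount a b m ≤ r ↔ ¬ (lcount a b ((2*r+1)*(a*b) - m) ≤ r)) := by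
  obtain ⟨x0, hx1, hx2, hmod⟩ := exists_x0 a b m hb hab hbm
  have hx1' : 1 ≤ b - x0 := by omega
  have hx2' : b - x0 < b := by omega
  have e1 : a*(b-x0) + a*x0 = a*b := by rw [← Nat.mul_add]; congr 1; omega
  have hmod' : a * (b - x0) ≡ (2*r+1)*(a*b) - m [MOD b] := by
    apply Nat.ModEq.add_right_cancel' m
    have e2 : ((2*r+1)*(a*b) - m) + m = (2*r+1)*(a*b) := by omega
    rw [e2]
    calc a*(b-x0) + m ≡ a*(b-x0) + a*x0 [MOD b] := Nat.ModEq.add_left _ hmod.symm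
      _ = a * b := e1
      _ ≡ 0 [MOD b] := (Nat.modEq_zero_iff_dvd).mpr ⟨a, mul_comm a b⟩
      _ ≡ (2*r+1)*(a*b) [MOD b] := ((Nat.modEq_zero_iff_dvd).mpr ⟨(2*r+1)*a, by ring⟩).symm
  rw [lcount_le_iff a b r m x0 ha hb hab hx1 hx2 hmod,
      lcount_le_iff a b r ((2*r+1)*(a*b)-m) (b-x0) ha hb hab hx1' hx2' hmod']
  have hPQ : a * x0 + a ≤ a * b := by
    have h1 := Nat.mul_le_mul_left a (show x0 ≤ b - 1 by omega)
    have h2 : a * (b-1) + a = a * b := mul_sub_one_add a b (by omega)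
    omega
  have eN : (2*r+1)*(a*b) = 2*(r*(a*b)) + a*b := by ring
  rw [eN] at hm2 ⊢
  have hG : a*(b-x0) = a*b - a*x0 := by omega
  rw [hG]
  have hmR : m ≡ a*x0 + r*(a*b) [MOD b] := by
    calc m ≡ a * x0 [MOD b] := hmod.symm
      _ ≡ a * x0 + r*(a*b) [MOD b] := by
          apply (Nat.modEq_iff_dvd' (Nat.le_add_right _ _)).mpr
          exact ⟨r*a, by ring_nf; omega⟩
  apply arith_xor (a*x0) (a*b) (r*(a*b)) b m (by omega) (by omega) ⟨r*a, by ring⟩ hm2 hm1 hmR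
  intro hmeq
  exact ham ⟨x0 + r*b, by rw [hmeq]; ring⟩

lemma exists_gt (a b r p : ℕ) (ha : 2 ≤ a) (hb : 2 ≤ b) (hab : Nat.Coprime a b)
    (hp : p.Prime) (hpb : ¬ p ∣ b) (m' : ℕ) (hm' : 0 < m') (hbm : ¬ b ∣ m') :
    ∃ s, r < lcount a b (p^s * m') := by
  have cob : Nat.Coprime b p := ((hp.coprime_iff_not_dvd).mpr hpb).symm
  refine ⟨(2*r+1)*(a*b), lcount_big a b r _ ha hb hab ?_ ?_⟩
  · intro hd
    exact hbm ((Nat.Coprime.pow_right _ cob).dvd_of_dvd_mul_left hd)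
  · set s := (2*r+1)*(a*b)
    calc s ≤ 2^s := (Nat.lt_two_pow_self).le
      _ ≤ p^s := Nat.pow_le_pow_left hp.two_le s
      _ ≤ p^s * m' := Nat.le_mul_of_pos_right _ hm'

lemma sfun_eq_find (a b r p m' : ℕ) (ha : 2 ≤ a) (hb : 2 ≤ b) (hp : 2 ≤ p)
    (hex : ∃ s, r < lcount a b (p^s * m')) :
    sfun a b r p m' = Nat.find hex := by
  have mono : ∀ s t : ℕ, s ≤ t → lcount a b (p^s * m') ≤ lcount a b (p^t * m') :=
    fun s t hst => lcount_mono_pow a b m' p s t (by omega) (by omega) (by omega) hst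
  unfold sfun
  by_cases H : ∃ s : ℕ, 1 ≤ s ∧ lcount a b (p ^ (s - 1) * m') ≤ r ∧ r < lcount a b (p ^ s * m')
  · rw [dif_pos H]
    obtain ⟨h1s, hle, hgt⟩ := H.choose_spec
    rcases eq_or_lt_of_le (Nat.find_min' hex hgt) with heq | hlt
    · exact heq.symm
    · exfalso
      have h1 : lcount a b (p ^ (Nat.find hex) * m') ≤ lcount a b (p ^ (H.choose - 1) * m') :=
        mono _ _ (by omega)
      have h2 := Nat.find_spec hex
      omega
  · rw [dif_neg H]
    by_contra hne
    have hpos : 1 ≤ Nat.find hex := by omega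
    refine H ⟨Nat.find hex, hpos, ?_, Nat.find_spec hex⟩
    have := Nat.find_min hex (m := Nat.find hex - 1) (by omega)
    omega

lemma lcount_le_iff_lt_find (a b r p m' : ℕ) (ha : 2 ≤ a) (hb : 2 ≤ b) (hp : 2 ≤ p)
    (hex : ∃ s, r < lcount a b (p^s * m')) (s : ℕ) :
    lcount a b (p^s * m') ≤ r ↔ s < Nat.find hex := by
  constructor
  · intro h
    by_contra hc
    have h1 : lcount a b (p ^ (Nat.find hex) * m') ≤ lcount a b (p ^ s * m') :=
      lcount_mono_pow a b m' p _ _ (by omega) (by omega) (by omega) (by omega)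
    have h2 := Nat.find_spec hex
    omega
  · intro h
    have := Nat.find_min hex h
    omega

lemma bdvd_iff (b p : ℕ) (hp : p.Prime) (hpb : ¬ p ∣ b) (m' s : ℕ) :
    b ∣ p^s * m' ↔ b ∣ m' := by
  have cob : Nat.Coprime b p := ((hp.coprime_iff_not_dvd).mpr hpb).symm
  constructor
  · exact fun hd => (Nat.Coprime.pow_right _ cob).dvd_of_dvd_mul_left hd
  · exact fun hd => Dvd.dvd.mul_left hd _

lemma advd_iff (a p u a' : ℕ) (hp : p.Prime) (hdecomp : a = p ^ u * a') (hpa' : ¬ p ∣ a')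
    (m' : ℕ) (hpm' : ¬ p ∣ m') (s : ℕ) :
    a ∣ p^s * m' ↔ (a' ∣ m' ∧ u ≤ s) := by
  have coa : Nat.Coprime a' p := ((hp.coprime_iff_not_dvd).mpr hpa').symm
  have com : Nat.Coprime m' p := ((hp.coprime_iff_not_dvd).mpr hpm').symm
  constructor
  · intro hd
    rw [hdecomp] at hd
    have ha' : a' ∣ p^s * m' := dvd_trans (Dvd.intro_left _ rfl) hd
    have ha'm : a' ∣ m' := (Nat.Coprime.pow_right _ coa).dvd_of_dvd_mul_left ha'
    have hpu : p^u ∣ p^s * m' := dvd_trans (Dvd.intro _ rfl) hd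
    have hpus : p^u ∣ p^s := (Nat.Coprime.pow_left _ com.symm).dvd_of_dvd_mul_right hpu
    have := (Nat.pow_dvd_pow_iff_le_right hp.one_lt).mp hpus
    exact ⟨ha'm, this⟩
  · rintro ⟨⟨t, rfl⟩, hus⟩
    refine ⟨p^(s-u) * t, ?_⟩
    rw [hdecomp]
    have hps : p ^ s = p^u * p^(s-u) := by rw [← pow_add]; congr 1; omega
    rw [hps]; ring

lemma hfun_eq_card (a b r p u a' : ℕ) (ha : 2 ≤ a) (hb : 2 ≤ b) (hab : Nat.Coprime a b)
    (hp : p.Prime) (hpb : ¬ p ∣ b) (hdecomp : a = p ^ u * a') (hpa' : ¬ p ∣ a')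
    (m' : ℕ) (hm' : 0 < m') (hpm' : ¬ p ∣ m') :
    hfun a b r p u a' m' =
      ((Finset.range ((2*r+1)*(a*b))).filter
        (fun s => lcount a b (p^s*m') ≤ r ∧ ¬ a ∣ p^s*m' ∧ ¬ b ∣ p^s*m')).card := by
  classical
  by_cases hbm : b ∣ m'
  · rw [hfun, if_pos hbm]
    symm
    rw [Finset.card_eq_zero, Finset.filter_eq_empty_iff]
    intro s _
    rintro ⟨-, -, hc⟩
    exact hc ((bdvd_iff b p hp hpb m' s).mpr hbm)
  · have hex := exists_gt a b r p ha hb hab hp hpb m' hm' hbm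
    set n := Nat.find hex with hn
    have hchar : ∀ s, lcount a b (p^s*m') ≤ r ↔ s < n :=
      lcount_le_iff_lt_find a b r p m' ha hb hp.two_le hex
    have hbs : ∀ s, ¬ b ∣ p^s*m' := fun s hd => hbm ((bdvd_iff b p hp hpb m' s).mp hd)
    have hnobound : n ≤ (2*r+1)*(a*b) := by
      rcases Nat.eq_zero_or_pos n with h0 | hpos
      · omega
      · have h1 : lcount a b (p^(n-1)*m') ≤ r := (hchar (n-1)).mpr (by omega)
        have h2 : p^(n-1)*m' < (2*r+1)*(a*b) := by
          by_contra hc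
          have := lcount_big a b r (p^(n-1)*m') ha hb hab (hbs (n-1)) (by omega)
          omega
        have h3 : n - 1 < p^(n-1)*m' := by
          calc n - 1 < 2^(n-1) := Nat.lt_two_pow_self
            _ ≤ p^(n-1) := Nat.pow_le_pow_left hp.two_le _
            _ ≤ p^(n-1)*m' := Nat.le_mul_of_pos_right _ hm'
        omega
    have hsfun : sfun a b r p m' = n := sfun_eq_find a b r p m' ha hb hp.two_le hex
    by_cases ham : a' ∣ m'
    · rw [hfun, if_neg hbm, if_pos ham, hsfun]
      have heq : ((Finset.range ((2*r+1)*(a*b))).filter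
          (fun s => lcount a b (p^s*m') ≤ r ∧ ¬ a ∣ p^s*m' ∧ ¬ b ∣ p^s*m'))
          = Finset.range (min n u) := by
        ext s
        simp only [Finset.mem_filter, Finset.mem_range,
          advd_iff a p u a' hp hdecomp hpa' m' hpm' s, hchar s]
        constructor
        · rintro ⟨-, h1, h2, -⟩
          have : ¬ u ≤ s := fun hc => h2 ⟨ham, hc⟩
          omega
        · intro hs
          exact ⟨by omega, by omega, fun hc => by omega, hbs s⟩
      rw [heq, Finset.card_range]
    · rw [hfun, if_neg hbm, if_neg ham, hsfun]
      have heq : ((Finset.range ((2*r+1)*(a*b))).filter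
          (fun s => lcount a b (p^s*m') ≤ r ∧ ¬ a ∣ p^s*m' ∧ ¬ b ∣ p^s*m'))
          = Finset.range n := by
        ext s
        simp only [Finset.mem_filter, Finset.mem_range,
          advd_iff a p u a' hp hdecomp hpa' m' hpm' s, hchar s]
        constructor
        · rintro ⟨-, h1, -, -⟩
          exact h1
        · intro hs
          exact ⟨by omega, by omega, fun hc => absurd hc.1 ham, hbs s⟩
      rw [heq, Finset.card_range]

lemma pow_mul_inj_aux (p : ℕ) (hp : p.Prime) {s t x y : ℕ} (hx : ¬ p ∣ x)
    (hxy : p^s * x = p^t * y) (hst : s ≤ t) : s = t ∧ x = y := by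
  have hc : p^s * x = p^s * (p^(t-s)*y) := by
    rw [hxy, ← mul_assoc, ← pow_add]; congr 2; omega
  have hxe : x = p^(t-s)*y := Nat.eq_of_mul_eq_mul_left (pow_pos hp.pos s) hc
  rcases Nat.eq_zero_or_pos (t - s) with h0 | hpos
  · refine ⟨by omega, ?_⟩
    rw [hxe, h0, pow_zero, one_mul]
  · exfalso; apply hx; rw [hxe]
    exact Dvd.dvd.mul_right (dvd_pow_self p (by omega)) y

lemma pow_mul_inj (p : ℕ) (hp : p.Prime) {s t x y : ℕ} (hx : ¬ p ∣ x) (hy : ¬ p ∣ y)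
    (hxy : p^s * x = p^t * y) : s = t ∧ x = y := by
  rcases le_total s t with h | h
  · exact pow_mul_inj_aux p hp hx hxy h
  · obtain ⟨h1, h2⟩ := pow_mul_inj_aux p hp hy hxy.symm h
    exact ⟨h1.symm, h2.symm⟩

lemma sum_eq_cardT (a b r p u a' : ℕ) (ha : 2 ≤ a) (hb : 2 ≤ b) (hab : Nat.Coprime a b)
    (hp : p.Prime) (hpb : ¬ p ∣ b) (hdecomp : a = p ^ u * a') (hpa' : ¬ p ∣ a') :
    (∑ᶠ m' ∈ {m : ℕ | 0 < m ∧ ¬ p ∣ m}, hfun a b r p u a' m')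
      = ((Finset.Ico 1 ((2*r+1)*(a*b))).filter
          (fun m => ¬ a ∣ m ∧ ¬ b ∣ m ∧ lcount a b m ≤ r)).card := by
  classical
  set N := (2*r+1)*(a*b) with hN
  set F : Finset ℕ := (Finset.Ico 1 N).filter (fun m => ¬ p ∣ m) with hF
  set G : ℕ → Finset ℕ := fun m' => (Finset.range N).filter
      (fun s => lcount a b (p^s*m') ≤ r ∧ ¬ a ∣ p^s*m' ∧ ¬ b ∣ p^s*m') with hG
  set T : Finset ℕ := (Finset.Ico 1 N).filter
      (fun m => ¬ a ∣ m ∧ ¬ b ∣ m ∧ lcount a b m ≤ r) with hT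
  -- small fact: elements counted are < N
  have hlt : ∀ m : ℕ, 0 < m → ¬ b ∣ m → lcount a b m ≤ r → m < N := by
    intro m h1 h2 h3
    by_contra hc
    have := lcount_big a b r m ha hb hab h2 (by omega)
    omega
  -- step 1 : reduce finsum to sum over F
  have step1 : (∑ᶠ m' ∈ {m : ℕ | 0 < m ∧ ¬ p ∣ m}, hfun a b r p u a' m')
      = ∑ m' ∈ F, hfun a b r p u a' m' := by
    apply finsum_mem_eq_sum_of_inter_support_eq
    ext x
    simp only [Set.mem_inter_iff, Set.mem_setOf_eq, Function.mem_support, Finset.mem_coe,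
      hF, Finset.mem_filter, Finset.mem_Ico]
    constructor
    · rintro ⟨⟨hx1, hx2⟩, hx3⟩
      refine ⟨⟨⟨hx1, ?_⟩, hx2⟩, hx3⟩
      rw [hfun_eq_card a b r p u a' ha hb hab hp hpb hdecomp hpa' x hx1 hx2] at hx3
      obtain ⟨s, hs⟩ := Finset.card_pos.mp (Nat.pos_of_ne_zero hx3)
      simp only [Finset.mem_filter, Finset.mem_range] at hs
      obtain ⟨-, hle, -, hbd⟩ := hs
      have hxlt := hlt (p^s*x) (Nat.mul_pos (pow_pos hp.pos s) (by omega)) hbd hle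
      calc x ≤ p^s * x := Nat.le_mul_of_pos_left x (pow_pos hp.pos s)
        _ < N := hxlt
    · rintro ⟨⟨⟨hx1, -⟩, hx2⟩, hx3⟩
      exact ⟨⟨hx1, hx2⟩, hx3⟩
  rw [step1]
  -- step 2 : rewrite each hfun as a card
  have step2 : ∑ m' ∈ F, hfun a b r p u a' m' = ∑ m' ∈ F, (G m').card := by
    apply Finset.sum_congr rfl
    intro m' hm'
    rw [hF] at hm'
    simp only [Finset.mem_filter, Finset.mem_Ico] at hm'
    exact hfun_eq_card a b r p u a' ha hb hab hp hpb hdecomp hpa' m' (by omega) hm'.2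
  rw [step2]
  -- step 3 : biUnion
  have hinj : ∀ m' ∈ F, ∀ s ∈ G m', ∀ t ∈ G m', p^s * m' = p^t * m' → s = t := by
    intro m' hm' s _ t _ hst
    rw [hF] at hm'
    simp only [Finset.mem_filter, Finset.mem_Ico] at hm'
    exact (pow_mul_inj p hp hm'.2 hm'.2 hst).1
  have himg : ∀ m' ∈ F, ((G m').image (fun s => p^s * m')).card = (G m').card := by
    intro m' hm'
    apply Finset.card_image_of_injOn
    intro s hs t ht hst
    exact hinj m' hm' s hs t ht hst
  have hdisj : ∀ x ∈ F, ∀ y ∈ F, x ≠ y →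
      Disjoint ((G x).image (fun s => p^s * x)) ((G y).image (fun s => p^s * y)) := by
    intro x hx y hy hxy
    rw [Finset.disjoint_left]
    intro z hzx hzy
    simp only [Finset.mem_image] at hzx hzy
    obtain ⟨s, -, hs⟩ := hzx
    obtain ⟨t, -, ht⟩ := hzy
    rw [hF] at hx hy
    simp only [Finset.mem_filter, Finset.mem_Ico] at hx hy
    exact hxy (pow_mul_inj p hp hx.2 hy.2 (hs.trans ht.symm)).2
  have hbiU : F.biUnion (fun m' => (G m').image (fun s => p^s * m')) = T := by
    ext z
    simp only [Finset.mem_biUnion, Finset.mem_image]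
    constructor
    · rintro ⟨m', hm', s, hs, rfl⟩
      rw [hF] at hm'
      rw [hG] at hs
      simp only [Finset.mem_filter, Finset.mem_Ico] at hm' hs
      obtain ⟨⟨hm1, -⟩, -⟩ := hm'
      obtain ⟨-, hle, hna, hnb⟩ := hs
      rw [hT]
      simp only [Finset.mem_filter, Finset.mem_Ico]
      have hz1 : 0 < p^s * m' := Nat.mul_pos (pow_pos hp.pos s) (by omega)
      exact ⟨⟨by omega, hlt _ hz1 hnb hle⟩, hna, hnb, hle⟩
    · intro hz
      rw [hT] at hz
      simp only [Finset.mem_filter, Finset.mem_Ico] at hz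
      obtain ⟨⟨hz1, hz2⟩, hna, hnb, hle⟩ := hz
      have hz0 : z ≠ 0 := by omega
      set s := z.factorization p with hs
      refine ⟨z / p ^ s, ?_, s, ?_, ?_⟩
      · rw [hF]
        simp only [Finset.mem_filter, Finset.mem_Ico]
        have hc1 : 0 < z / p ^ s := Nat.ordCompl_pos p hz0
        have hc2 : z / p ^ s ≤ z := Nat.le_of_dvd (by omega) (Nat.ordCompl_dvd z p)
        exact ⟨⟨hc1, by omega⟩, Nat.not_dvd_ordCompl hp hz0⟩
      · rw [hG]
        simp only [Finset.mem_filter, Finset.mem_range]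
        have hre : p ^ s * (z / p ^ s) = z := Nat.ordProj_mul_ordCompl_eq_self z p
        rw [hre]
        have hps : p ^ s ≤ z := Nat.le_of_dvd (by omega) (Nat.ordProj_dvd z p)
        have hss : s < 2^s := Nat.lt_two_pow_self
        have h2p : 2^s ≤ p^s := Nat.pow_le_pow_left hp.two_le s
        exact ⟨by omega, hle, hna, hnb⟩
      · exact Nat.ordProj_mul_ordCompl_eq_self z p
  calc ∑ m' ∈ F, (G m').card = ∑ m' ∈ F, ((G m').image (fun s => p^s * m')).card :=
        (Finset.sum_congr rfl (fun m' hm' => (himg m' hm').symm))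
    _ = (F.biUnion (fun m' => (G m').image (fun s => p^s * m'))).card :=
        (Finset.card_biUnion hdisj).symm
    _ = T.card := by rw [hbiU]

lemma pred_mul_div (a k : ℕ) (ha : 2 ≤ a) (hk : 1 ≤ k) : (a * k - 1) / a = k - 1 := by
  have h1 : a * (k-1) + a = a * k := mul_sub_one_add a k hk
  have h2 : a * k - 1 = a * (k-1) + (a - 1) := by omega
  rw [h2, Nat.mul_add_div (by omega)]
  rw [Nat.div_eq_of_lt (by omega)]
  omega

lemma cardT (a b r : ℕ) (ha : 2 ≤ a) (hb : 2 ≤ b) (hab : Nat.Coprime a b) :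
    ((Finset.Ico 1 ((2*r+1)*(a*b))).filter
        (fun m => ¬ a ∣ m ∧ ¬ b ∣ m ∧ lcount a b m ≤ r)).card
      = (2 * r + 1) * (a - 1) * (b - 1) / 2 := by
  classical
  set N := (2*r+1)*(a*b) with hN
  have hNpos : a * b ≤ N := by
    rw [hN]; exact Nat.le_mul_of_pos_left _ (by omega)
  have hab4 : 4 ≤ a * b := by nlinarith
  have hicoioc : Finset.Ico 1 N = Finset.Ioc 0 (N-1) := by
    ext x
    simp only [Finset.mem_Ico, Finset.mem_Ioc]
    omega
  set V := Finset.Ioc 0 (N-1) with hV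
  set U : Finset ℕ := V.filter (fun m => ¬ a ∣ m ∧ ¬ b ∣ m) with hU
  set T : Finset ℕ := U.filter (fun m => lcount a b m ≤ r) with hT
  set T' : Finset ℕ := U.filter (fun m => ¬ lcount a b m ≤ r) with hT'
  have hTeq : (Finset.Ico 1 N).filter (fun m => ¬ a ∣ m ∧ ¬ b ∣ m ∧ lcount a b m ≤ r) = T := by
    rw [hT, hU, Finset.filter_filter, hicoioc]
    apply Finset.filter_congr
    intro m _
    simp only [and_assoc]
  rw [hTeq]
  -- dividers
  have haN : a ∣ N := ⟨(2*r+1)*b, by rw [hN]; ring⟩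
  have hbN : b ∣ N := ⟨(2*r+1)*a, by rw [hN]; ring⟩
  -- membership helper
  have hmemU : ∀ m, m ∈ U ↔ (1 ≤ m ∧ m < N ∧ ¬ a ∣ m ∧ ¬ b ∣ m) := by
    intro m
    rw [hU, hV]
    simp only [Finset.mem_filter, Finset.mem_Ioc]
    omega
  -- the involution
  have hmap : ∀ m ∈ T, N - m ∈ T' := by
    intro m hm
    rw [hT, Finset.mem_filter, hmemU] at hm
    obtain ⟨⟨hm1, hm2, hma, hmb⟩, hml⟩ := hm
    rw [hT', Finset.mem_filter, hmemU]
    have hna : ¬ a ∣ (N - m) := by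
      intro hd
      exact hma (by simpa [Nat.sub_sub_self hm2.le] using Nat.dvd_sub haN hd)
    have hnb : ¬ b ∣ (N - m) := by
      intro hd
      exact hmb (by simpa [Nat.sub_sub_self hm2.le] using Nat.dvd_sub hbN hd)
    refine ⟨⟨by omega, by omega, hna, hnb⟩, ?_⟩
    exact (lcount_xor a b r m ha hb hab hma hmb hm1 hm2).mp hml
  have hmap' : ∀ m ∈ T', N - m ∈ T := by
    intro m hm
    rw [hT', Finset.mem_filter, hmemU] at hm
    obtain ⟨⟨hm1, hm2, hma, hmb⟩, hml⟩ := hm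
    rw [hT, Finset.mem_filter, hmemU]
    have hna : ¬ a ∣ (N - m) := by
      intro hd
      exact hma (by simpa [Nat.sub_sub_self hm2.le] using Nat.dvd_sub haN hd)
    have hnb : ¬ b ∣ (N - m) := by
      intro hd
      exact hmb (by simpa [Nat.sub_sub_self hm2.le] using Nat.dvd_sub hbN hd)
    refine ⟨⟨by omega, by omega, hna, hnb⟩, ?_⟩
    have hxor := lcount_xor a b r (N-m) ha hb hab hna hnb (by omega) (by omega)
    have hNr : (2*r+1)*(a*b) - (N - m) = m := by omega
    rw [hNr] at hxor
    exact hxor.mpr hml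
  have hbij : T.card = T'.card := by
    apply Finset.card_bij' (fun m _ => N - m) (fun m _ => N - m) hmap hmap'
    · intro m hm
      rw [hT, Finset.mem_filter, hmemU] at hm
      omega
    · intro m hm
      rw [hT', Finset.mem_filter, hmemU] at hm
      omega
  have hsplitT : T.card + T'.card = U.card :=
    Finset.card_filter_add_card_filter_not (fun m => lcount a b m ≤ r)
  -- inclusion-exclusion on U
  set W : Finset ℕ := V.filter (fun m => a ∣ m ∨ b ∣ m) with hW
  have hsplitU : U.card + W.card = V.card := by
    rw [hU, hW]
    have : V.filter (fun m => a ∣ m ∨ b ∣ m) = V.filter (fun m => ¬ (¬ a ∣ m ∧ ¬ b ∣ m)) := by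
      apply Finset.filter_congr
      intro m _
      constructor
      · intro h hc; tauto
      · intro h; by_contra hc; push_neg at hc; exact h ⟨hc.1, hc.2⟩
    rw [this]
    exact Finset.card_filter_add_card_filter_not (fun m => ¬ a ∣ m ∧ ¬ b ∣ m)
  have hWor : W = V.filter (a ∣ ·) ∪ V.filter (b ∣ ·) := by
    rw [hW, Finset.filter_or]
  have hinter : V.filter (a ∣ ·) ∩ V.filter (b ∣ ·) = V.filter ((a*b) ∣ ·) := by
    rw [← Finset.filter_and]
    apply Finset.filter_congr
    intro m _
    constructor
    · intro h; exact hab.mul_dvd_of_dvd_of_dvd h.1 h.2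
    · intro h; exact ⟨dvd_trans (Dvd.intro b rfl) h, dvd_trans (Dvd.intro_left a rfl) h⟩
  have hiecard : W.card + (V.filter ((a*b) ∣ ·)).card
      = (V.filter (a ∣ ·)).card + (V.filter (b ∣ ·)).card := by
    rw [hWor, ← hinter]
    exact Finset.card_union_add_card_inter _ _
  -- card values
  have hVcard : V.card = N - 1 := by rw [hV, Nat.card_Ioc]; omega
  have hcA : (V.filter (a ∣ ·)).card = (2*r+1)*b - 1 := by
    rw [hV, Nat.Ioc_filter_dvd_card_eq_div]
    rw [show N = a * ((2*r+1)*b) by rw [hN]; ring]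
    exact pred_mul_div a ((2*r+1)*b) ha (Nat.mul_pos (by omega) (by omega))
  have hcB : (V.filter (b ∣ ·)).card = (2*r+1)*a - 1 := by
    rw [hV, Nat.Ioc_filter_dvd_card_eq_div]
    rw [show N = b * ((2*r+1)*a) by rw [hN]; ring]
    exact pred_mul_div b ((2*r+1)*a) hb (Nat.mul_pos (by omega) (by omega))
  have hcAB : (V.filter ((a*b) ∣ ·)).card = 2*r := by
    rw [hV, Nat.Ioc_filter_dvd_card_eq_div]
    rw [show N = (a*b) * (2*r+1) by rw [hN]; ring]
    rw [pred_mul_div (a*b) (2*r+1) (by omega) (by omega)]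
    omega
  have hprod : (2*r+1)*(a-1)*(b-1) + ((2*r+1)*b) + ((2*r+1)*a) = N + 2*r + 1 := by
    obtain ⟨A, rfl⟩ : ∃ A, a = A+1 := ⟨a-1, by omega⟩
    obtain ⟨B, rfl⟩ : ∃ B, b = B+1 := ⟨b-1, by omega⟩
    simp only [Nat.add_sub_cancel]
    rw [hN]; ring
  have h1b : 1 ≤ (2*r+1)*b := Nat.mul_pos (by omega) (by omega)
  have h1a : 1 ≤ (2*r+1)*a := Nat.mul_pos (by omega) (by omega)
  omega

theorem stmt_17 (a b r p u a' : ℕ) (ha : 2 ≤ a) (hb : 2 ≤ b) (hab : Nat.Coprime a b)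
    (hp : p.Prime) (hpb : ¬ p ∣ b) (hdecomp : a = p ^ u * a') (hpa' : ¬ p ∣ a') :
    (∑ᶠ m' ∈ {m : ℕ | 0 < m ∧ ¬ p ∣ m}, hfun a b r p u a' m')
      = (2 * r + 1) * (a - 1) * (b - 1) / 2 := by
  rw [sum_eq_cardT a b r p u a' ha hb hab hp hpb hdecomp hpa']
  exact cardT a b r ha hb hab
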